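/- arXiv:math/0503708 — 9 statements merged into one kernel-verified Lean document; each statement's English description precedes it below -/
import Mathlib

section
/- Let S = [[A, B],[C, D]] (n×n blocks) be a real 2n×2n symplectic matrix with det B ≠ 0. Then det(S − I) = (−1)ⁿ · det(B) · det(B⁻¹A + D·B⁻¹ − B⁻¹ − (Bᵀ)⁻¹). -/
/-!
Expanding a block matrix along an invertible upper-right block `B` gives
`det [[P, B], [Q, R]] = (-1)ⁿ det B · det (Q - R B⁻¹ P)`. For `S - I` this complement is
`C - (D - I) B⁻¹ (A - I) = (C - D B⁻¹ A) + B⁻¹ A + D B⁻¹ - B⁻¹`, and symplecticity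
(`Bᵀ C - Dᵀ A = -I`, `Bᵀ D = Dᵀ B`) gives `Bᵀ (C - D B⁻¹ A) = -I`, i.e. `C - D B⁻¹ A = -(Bᵀ)⁻¹`.
-/

open Matrix

/-- The standard symplectic matrix `J = [[0, I],[-I, 0]]`. -/
noncomputable def sympJ (n : ℕ) : Matrix (Fin n ⊕ Fin n) (Fin n ⊕ Fin n) ℝ :=
  Matrix.fromBlocks 0 1 (-1) 0

namespace Matrix

theorem fromBlocks_sub_one {m R : Type*} [DecidableEq m] [Ring R] (A B C D : Matrix m m R) :
    fromBlocks A B C D - 1 = fromBlocks (A - 1) B C (D - 1) := by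
  rw [← fromBlocks_one, sub_eq_add_neg, fromBlocks_neg, fromBlocks_add]
  simp only [sub_eq_add_neg, neg_zero, add_zero]

variable {m R : Type*} [Fintype m] [DecidableEq m] [CommRing R]

theorem det_fromBlocks_zero_neg_one_one_zero :
    (fromBlocks 0 (-1) 1 0 : Matrix (m ⊕ m) (m ⊕ m) R).det = 1 := by
  have shears : (fromBlocks 0 (-1) 1 0 : Matrix (m ⊕ m) (m ⊕ m) R) =
      fromBlocks 1 (-1) 0 1 * fromBlocks 1 0 1 1 * fromBlocks 1 (-1) 0 1 := by
    simp [fromBlocks_multiply]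
  simp [shears]

theorem det_fromBlocks_of_isUnit_det₁₂ (A B C D : Matrix m m R) (hB : IsUnit B.det) :
    (fromBlocks A B C D).det = (-1) ^ Fintype.card m * B.det * (C - D * B⁻¹ * A).det := by
  have : Invertible B := invertibleOfIsUnitDet B hB
  have rotate : fromBlocks A B C D * fromBlocks 0 (-1) 1 0 = fromBlocks B (-A) D (-C) := by
    simp [fromBlocks_multiply]
  calc (fromBlocks A B C D).det
      = (fromBlocks A B C D * fromBlocks 0 (-1) 1 0).det := by
        rw [det_mul, det_fromBlocks_zero_neg_one_one_zero, mul_one]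
    _ = B.det * (-(C - D * B⁻¹ * A)).det := by
        rw [rotate, det_fromBlocks₁₁, invOf_eq_nonsing_inv]
        congr 2
        noncomm_ring
    _ = (-1) ^ Fintype.card m * B.det * (C - D * B⁻¹ * A).det := by
        rw [det_neg]; ring

theorem sub_mul_inv_mul_eq_neg_inv_transpose {A B C D : Matrix m m R} (hB : IsUnit B.det)
    (h₂₁ : Bᵀ * C - Dᵀ * A = -1) (h₂₂ : Bᵀ * D = Dᵀ * B) :
    C - D * B⁻¹ * A = -Bᵀ⁻¹ := by
  have h : Bᵀ * (C - D * B⁻¹ * A) = -1 := by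
    rw [Matrix.mul_sub, ← h₂₁, ← Matrix.mul_assoc, ← Matrix.mul_assoc, h₂₂, Matrix.mul_assoc Dᵀ,
      mul_nonsing_inv B hB, Matrix.mul_one]
  rw [eq_neg_iff_add_eq_zero, ← neg_eq_iff_add_eq_zero, eq_comm]
  exact inv_eq_right_inv (by rw [Matrix.mul_neg, h, neg_neg])

end Matrix

theorem fromBlocks_transpose_mul_sympJ_mul_fromBlocks {n : ℕ}
    (A B C D : Matrix (Fin n) (Fin n) ℝ) :
    (fromBlocks A B C D)ᵀ * sympJ n * fromBlocks A B C D =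
      fromBlocks (Aᵀ * C - Cᵀ * A) (Aᵀ * D - Cᵀ * B) (Bᵀ * C - Dᵀ * A) (Bᵀ * D - Dᵀ * B) := by
  simp only [sympJ, fromBlocks_transpose, fromBlocks_multiply]
  congr 1 <;> noncomm_ring

/-- if `S = [[A,B],[C,D]]` is symplectic with `det B ≠ 0`, then
`det (S - I) = (-1)ⁿ det B · det (B⁻¹A + D B⁻¹ - B⁻¹ - (Bᵀ)⁻¹)`. -/
theorem det_S_sub_one_free {n : ℕ} (A B C D : Matrix (Fin n) (Fin n) ℝ)
    (hS : (Matrix.fromBlocks A B C D)ᵀ * sympJ n * Matrix.fromBlocks A B C D = sympJ n)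
    (hB : B.det ≠ 0) :
    (Matrix.fromBlocks A B C D - 1).det
      = (-1 : ℝ) ^ n * B.det * (B⁻¹ * A + D * B⁻¹ - B⁻¹ - (Bᵀ)⁻¹).det := by
  rw [fromBlocks_transpose_mul_sympJ_mul_fromBlocks, sympJ] at hS
  obtain ⟨-, -, h₂₁, h₂₂⟩ := fromBlocks_inj.mp hS
  have complement : C - D * B⁻¹ * A = -Bᵀ⁻¹ :=
    sub_mul_inv_mul_eq_neg_inv_transpose hB.isUnit h₂₁ (sub_eq_zero.mp h₂₂)
  rw [fromBlocks_sub_one, det_fromBlocks_of_isUnit_det₁₂ _ _ _ _ hB.isUnit, Fintype.card_fin]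
  congr 2
  calc C - (D - 1) * B⁻¹ * (A - 1)
      = (C - D * B⁻¹ * A) + B⁻¹ * A + D * B⁻¹ - B⁻¹ := by noncomm_ring
    _ = B⁻¹ * A + D * B⁻¹ - B⁻¹ - Bᵀ⁻¹ := by rw [complement]; abel
end

section
/- Let P, Q, L be real n×n matrices with P = Pᵀ, Q = Qᵀ and L invertible, and let S_W be the 2n×2n matrix with block form S_W = [[L⁻¹Q, L⁻¹],[P·L⁻¹·Q − Lᵀ, P·L⁻¹]]. Then det(S_W − I) = (−1)ⁿ · det(L⁻¹) · det(P + Q − L − Lᵀ). -/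
open Matrix

/-- The free symplectic matrix `S_W = [[L⁻¹Q, L⁻¹],[P L⁻¹ Q - Lᵀ, P L⁻¹]]` generated by the
quadratic form `W(x,x') = ½⟨Px,x⟩ - ⟨Lx,x'⟩ + ½⟨Qx',x'⟩`. -/
noncomputable def freeSymplectic {n : ℕ} (P L Q : Matrix (Fin n) (Fin n) ℝ) :
    Matrix (Fin n ⊕ Fin n) (Fin n ⊕ Fin n) ℝ :=
  Matrix.fromBlocks (L⁻¹ * Q) L⁻¹ (P * L⁻¹ * Q - Lᵀ) (P * L⁻¹)

lemma det_fromBlocks_swap {n : ℕ} :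
    (Matrix.fromBlocks (0 : Matrix (Fin n) (Fin n) ℝ) (1 : Matrix (Fin n) (Fin n) ℝ)
      (1 : Matrix (Fin n) (Fin n) ℝ) (0 : Matrix (Fin n) (Fin n) ℝ)).det = (-1 : ℝ) ^ n := by
  have h : Matrix.fromBlocks (0 : Matrix (Fin n) (Fin n) ℝ) (1 : Matrix (Fin n) (Fin n) ℝ)
      (1 : Matrix (Fin n) (Fin n) ℝ) (0 : Matrix (Fin n) (Fin n) ℝ) =
      Matrix.fromBlocks (1 : Matrix (Fin n) (Fin n) ℝ) 1 0 1 *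
        Matrix.fromBlocks (1 : Matrix (Fin n) (Fin n) ℝ) 0 (-1) 1 *
        Matrix.fromBlocks (1 : Matrix (Fin n) (Fin n) ℝ) 1 0 1 *
        Matrix.fromBlocks (-1 : Matrix (Fin n) (Fin n) ℝ) 0 0 1 := by
    simp [Matrix.fromBlocks_multiply, Matrix.mul_one, Matrix.one_mul]
  rw [h, det_mul, det_mul, det_mul, Matrix.det_fromBlocks_zero₂₁,
    Matrix.det_fromBlocks_zero₁₂, Matrix.det_fromBlocks_zero₂₁]
  simp [Matrix.det_neg]

/-- `det (S_W - I) = (-1)ⁿ det (L⁻¹) · det (P + Q - L - Lᵀ)`. -/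
theorem det_freeSymplectic_sub_one {n : ℕ} (P L Q : Matrix (Fin n) (Fin n) ℝ)
    (hP : Pᵀ = P) (hQ : Qᵀ = Q) (hL : L.det ≠ 0) :
    (freeSymplectic P L Q - 1).det
      = (-1 : ℝ) ^ n * (L⁻¹).det * (P + Q - L - Lᵀ).det := by
  have hLinv : (L⁻¹).det ≠ 0 := by
    rw [Matrix.det_nonsing_inv, Ring.inverse_eq_inv']
    exact inv_ne_zero hL
  have hU : IsUnit L.det := isUnit_iff_ne_zero.mpr hL
  haveI : Invertible (L⁻¹) := (L⁻¹).invertibleOfIsUnitDet (isUnit_iff_ne_zero.mpr hLinv)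
  -- Decompose `S_W - 1` as a row swap times a block matrix with invertible bottom-right block.
  have hdecomp : freeSymplectic P L Q - 1 =
      Matrix.fromBlocks (0 : Matrix (Fin n) (Fin n) ℝ) 1 1 0 *
        Matrix.fromBlocks (P * L⁻¹ * Q - Lᵀ) (P * L⁻¹ - 1) (L⁻¹ * Q - 1) L⁻¹ := by
    rw [freeSymplectic, sub_eq_add_neg, ← Matrix.fromBlocks_one, Matrix.fromBlocks_neg,
      Matrix.fromBlocks_add, Matrix.fromBlocks_multiply]
    simp [sub_eq_add_neg]
  rw [hdecomp, det_mul, det_fromBlocks_swap (n := n),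
    Matrix.det_fromBlocks₂₂, Matrix.invOf_eq_nonsing_inv, Matrix.nonsing_inv_nonsing_inv L hU]
  have hschur : (P * L⁻¹ * Q - Lᵀ) - (P * L⁻¹ - 1) * L * (L⁻¹ * Q - 1)
      = P + Q - L - Lᵀ := by
    have h1 : (P * L⁻¹ - 1) * L = P - L := by
      rw [Matrix.sub_mul, Matrix.one_mul, Matrix.mul_assoc,
        Matrix.nonsing_inv_mul L hU, Matrix.mul_one]
    have h2 : L * (L⁻¹ * Q) = Q := by
      rw [← Matrix.mul_assoc, Matrix.mul_nonsing_inv L hU, Matrix.one_mul]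
    rw [h1, Matrix.sub_mul, Matrix.mul_sub, Matrix.mul_sub, h2, Matrix.mul_one,
      Matrix.mul_one, ← Matrix.mul_assoc]
    abel
  rw [hschur]
  ring
end

section
/- Let P, Q, L be real n×n matrices with P = Pᵀ, Q = Qᵀ and L invertible. Then S_W = [[L⁻¹Q, L⁻¹],[P·L⁻¹·Q − Lᵀ, P·L⁻¹]] is a symplectic matrix whose upper-right n×n block is invertible. Conversely, if S = [[A, B],[C, D]] is symplectic with det B ≠ 0, then S = S_W for the choice P = D·B⁻¹, L = B⁻¹, Q = B⁻¹·A, and for this choice P and Q are symmetric. -/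
open Matrix

lemma symp_mul_blocks {n : ℕ} (A B C D : Matrix (Fin n) (Fin n) ℝ) :
    (fromBlocks A B C D)ᵀ * sympJ n * fromBlocks A B C D
      = fromBlocks (Aᵀ*C - Cᵀ*A) (Aᵀ*D - Cᵀ*B) (Bᵀ*C - Dᵀ*A) (Bᵀ*D - Dᵀ*B) := by
  simp [sympJ, fromBlocks_transpose, fromBlocks_multiply, sub_eq_add_neg, add_comm]

/-- `S_W` is symplectic and its upper-right block `L⁻¹` is invertible;
conversely every symplectic `S = [[A,B],[C,D]]` with `det B ≠ 0` equals `S_W` for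
`P = D B⁻¹`, `L = B⁻¹`, `Q = B⁻¹ A`, and these `P`, `Q` are symmetric. -/
theorem freeSymplectic_characterization {n : ℕ} :
    (∀ P L Q : Matrix (Fin n) (Fin n) ℝ, Pᵀ = P → Qᵀ = Q → L.det ≠ 0 →
      (freeSymplectic P L Q)ᵀ * sympJ n * freeSymplectic P L Q = sympJ n
        ∧ (L⁻¹).det ≠ 0)
    ∧ ∀ A B C D : Matrix (Fin n) (Fin n) ℝ,
      (Matrix.fromBlocks A B C D)ᵀ * sympJ n * Matrix.fromBlocks A B C D = sympJ n →
      B.det ≠ 0 →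
      Matrix.fromBlocks A B C D = freeSymplectic (D * B⁻¹) B⁻¹ (B⁻¹ * A)
        ∧ (D * B⁻¹)ᵀ = D * B⁻¹ ∧ (B⁻¹ * A)ᵀ = B⁻¹ * A := by
  constructor
  · intro P L Q hP hQ hL
    have hLu : IsUnit L.det := isUnit_iff_ne_zero.mpr hL
    have hLtu : IsUnit (Lᵀ).det := by rwa [det_transpose]
    constructor
    · rw [freeSymplectic, symp_mul_blocks, sympJ]
      refine fromBlocks_inj.mpr ⟨?_, ?_, ?_, ?_⟩
      · simp [transpose_mul, transpose_sub, hP, hQ, transpose_nonsing_inv,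
          Matrix.mul_sub, Matrix.sub_mul, Matrix.mul_assoc,
          Matrix.mul_nonsing_inv_cancel_left _ _ hLu,
          Matrix.nonsing_inv_mul_cancel_left _ _ hLtu,
          Matrix.nonsing_inv_mul _ hLtu, Matrix.mul_nonsing_inv _ hLu]
      · simp [transpose_mul, transpose_sub, hP, hQ, transpose_nonsing_inv,
          Matrix.mul_sub, Matrix.sub_mul, Matrix.mul_assoc,
          Matrix.mul_nonsing_inv_cancel_left _ _ hLu,
          Matrix.nonsing_inv_mul_cancel_left _ _ hLtu,
          Matrix.nonsing_inv_mul _ hLtu, Matrix.mul_nonsing_inv _ hLu]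
      · simp [transpose_mul, transpose_sub, hP, hQ, transpose_nonsing_inv,
          Matrix.mul_sub, Matrix.sub_mul, Matrix.mul_assoc,
          Matrix.mul_nonsing_inv_cancel_left _ _ hLu,
          Matrix.nonsing_inv_mul_cancel_left _ _ hLtu,
          Matrix.nonsing_inv_mul _ hLtu, Matrix.mul_nonsing_inv _ hLu]
      · simp [transpose_mul, hP, Matrix.mul_assoc]
    · rw [Matrix.det_nonsing_inv]
      simpa using hL
  · intro A B C D h hB
    have hBu : IsUnit B.det := isUnit_iff_ne_zero.mpr hB
    have hBtu : IsUnit (Bᵀ).det := by rwa [det_transpose]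
    rw [symp_mul_blocks, sympJ] at h
    obtain ⟨e11, e12, e21, e22⟩ := fromBlocks_inj.mp h
    have e22' : Bᵀ * D = Dᵀ * B := by
      have := sub_eq_zero.mp e22; linear_combination (norm := noncomm_ring) this
    have e21' : Dᵀ * A - Bᵀ * C = 1 := by
      linear_combination (norm := noncomm_ring) -e21
    have h1 : Bᵀ * (D * B⁻¹ * A - C) = 1 := by
      have : Bᵀ * (D * B⁻¹ * A) = Dᵀ * A := by
        calc Bᵀ * (D * B⁻¹ * A) = (Bᵀ * D) * (B⁻¹ * A) := by noncomm_ring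
          _ = Dᵀ * (B * (B⁻¹ * A)) := by rw [e22']; noncomm_ring
          _ = Dᵀ * A := by rw [Matrix.mul_nonsing_inv_cancel_left _ _ hBu]
      rw [Matrix.mul_sub, this, e21']
    have hC : C = D * B⁻¹ * A - Bᵀ⁻¹ := by
      have := Matrix.inv_eq_right_inv h1
      rw [this]; abel
    have hPsym : (D * B⁻¹)ᵀ = D * B⁻¹ := by
      rw [transpose_mul, transpose_nonsing_inv]
      calc Bᵀ⁻¹ * Dᵀ = Bᵀ⁻¹ * (Dᵀ * B) * B⁻¹ := by
            rw [Matrix.mul_assoc, Matrix.mul_assoc, Matrix.mul_nonsing_inv _ hBu, Matrix.mul_one]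
        _ = Bᵀ⁻¹ * (Bᵀ * D) * B⁻¹ := by rw [e22']
        _ = D * B⁻¹ := by rw [Matrix.nonsing_inv_mul_cancel_left _ _ hBtu]
    have hQsym : (B⁻¹ * A)ᵀ = B⁻¹ * A := by
      rw [transpose_mul, transpose_nonsing_inv]
      have hCt : Cᵀ = Aᵀ * (D * B⁻¹) - B⁻¹ := by
        rw [hC, transpose_sub, transpose_mul, hPsym, transpose_nonsing_inv,
          transpose_transpose]
      have h2 := e11
      rw [hCt, hC] at h2
      linear_combination (norm := noncomm_ring) -h2
    refine ⟨?_, hPsym, hQsym⟩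
    rw [freeSymplectic, Matrix.nonsing_inv_nonsing_inv _ hBu]
    refine fromBlocks_inj.mpr ⟨?_, rfl, ?_, ?_⟩
    · rw [Matrix.mul_nonsing_inv_cancel_left _ _ hBu]
    · rw [hC, transpose_nonsing_inv]
      congr 1
      rw [Matrix.mul_assoc (D * B⁻¹), Matrix.mul_nonsing_inv_cancel_left _ _ hBu,
        Matrix.mul_assoc]
    · rw [Matrix.nonsing_inv_mul_cancel_right _ _ hBu]
end

section
/- The free symplectic matrices form a dense subset of Sp(n); that is, the set of symplectic 2n×2n matrices whose upper-right n×n block is invertible is dense in the symplectic group (with the topology induced from the space of 2n×2n real matrices). -/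
open Matrix Polynomial Filter
open scoped ComplexOrder

section aux

variable {n : ℕ}

lemma sympJ_mul_self (n : ℕ) : sympJ n * sympJ n = -1 := by
  simp [sympJ, Matrix.fromBlocks_multiply]
  rw [← Matrix.fromBlocks_one]
  ext (i|i) (j|j) <;> simp [Matrix.fromBlocks]

/-- From `SᵀJS = J` derive `SJSᵀ = J`. -/
lemma symp_other {S : Matrix (Fin n ⊕ Fin n) (Fin n ⊕ Fin n) ℝ}
    (hS : Sᵀ * sympJ n * S = sympJ n) : S * sympJ n * Sᵀ = sympJ n := by
  set J := sympJ n
  have hJJ := sympJ_mul_self n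
  have hleft : (-(J * Sᵀ * J)) * S = 1 := by
    have h0 : J * (Sᵀ * J * S) = J * J := by rw [hS]
    rw [hJJ] at h0
    have h1 : (J * Sᵀ * J) * S = -1 := by
      rw [← h0]; simp only [Matrix.mul_assoc]
    calc (-(J * Sᵀ * J)) * S = -((J * Sᵀ * J) * S) := by rw [Matrix.neg_mul]
    _ = -(-1) := by rw [h1]
    _ = 1 := neg_neg 1
  have hright : S * (-(J * Sᵀ * J)) = 1 := mul_eq_one_comm.mp hleft
  have h2 : S * (J * Sᵀ * J) = -1 := by
    have := congrArg Neg.neg hright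
    simpa [Matrix.mul_neg] using this
  have h3 : S * (J * Sᵀ * J) * J = -J := by rw [h2]; simp [Matrix.neg_mul]
  have h4 : S * J * Sᵀ * (J * J) = -J := by
    rw [← h3]; simp only [Matrix.mul_assoc]
  rw [hJJ, Matrix.mul_neg, Matrix.mul_one] at h4
  exact neg_injective h4

/-- The key nondegeneracy: if `ABᵀ = BAᵀ` and `ADᵀ - BCᵀ = 1` (which hold for the
blocks of a symplectic matrix), then `det(iA + B) ≠ 0` over `ℂ`. -/
lemma key_det (A B C D : Matrix (Fin n) (Fin n) ℝ)
    (hAB : A * Bᵀ = B * Aᵀ) (hAD : A * Dᵀ - B * Cᵀ = 1) :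
    (Complex.I • (A.map (Complex.ofRealHom)) + B.map (Complex.ofRealHom)).det ≠ 0 := by
  set f := Complex.ofRealHom with hf
  set A' := A.map ⇑f with hA'
  set B' := B.map ⇑f with hB'
  set C' := C.map ⇑f with hC'
  set D' := D.map ⇑f with hD'
  have hmapT : ∀ (M : Matrix (Fin n) (Fin n) ℝ), (Mᵀ).map ⇑f = (M.map ⇑f)ᵀ := fun M =>
    Matrix.transpose_map
  have hAB' : A' * B'ᵀ = B' * A'ᵀ := by
    have := congrArg (Matrix.map · ⇑f) hAB
    simpa [Matrix.map_mul, hmapT] using this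
  have hAD' : A' * D'ᵀ - B' * C'ᵀ = 1 := by
    have := congrArg (Matrix.map · ⇑f) hAD
    simpa [Matrix.map_mul, Matrix.map_sub, hmapT, Matrix.map_one f f.map_zero f.map_one]
      using this
  -- real-entried matrices are conj-stable
  have hreal : ∀ (M : Matrix (Fin n) (Fin n) ℝ), ((M.map ⇑f)ᵀ)ᴴ = M.map ⇑f := by
    intro M
    ext i j
    simp [Matrix.conjTranspose_apply, hf]
  have hker : ∀ v : Fin n → ℂ, (Complex.I • A'ᵀ + B'ᵀ) *ᵥ v = 0 → v = 0 := by
    intro v hv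
    set a := A'ᵀ *ᵥ v with ha
    set b := B'ᵀ *ᵥ v with hbv
    have hb : b = -(Complex.I • a) := by
      have : Complex.I • a + b = 0 := by
        rw [ha, hbv, ← Matrix.smul_mulVec, ← Matrix.add_mulVec, hv]
      linear_combination (norm := module) this
    have hstar : ∀ (M : Matrix (Fin n) (Fin n) ℝ),
        star v ᵥ* (M.map ⇑f) = star ((M.map ⇑f)ᵀ *ᵥ v) := by
      intro M
      rw [Matrix.star_mulVec, hreal]
    have h1 : star v ⬝ᵥ ((A' * B'ᵀ) *ᵥ v) = star a ⬝ᵥ b := by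
      rw [← Matrix.mulVec_mulVec, Matrix.dotProduct_mulVec, hA', hstar, ← hA', ← ha]
    have h2 : star v ⬝ᵥ ((B' * A'ᵀ) *ᵥ v) = star b ⬝ᵥ a := by
      rw [← Matrix.mulVec_mulVec, Matrix.dotProduct_mulVec, hB', hstar, ← hB', ← hbv]
    have h12 : star a ⬝ᵥ b = star b ⬝ᵥ a := by rw [← h1, ← h2, hAB']
    set s := star a ⬝ᵥ a with hs
    have hL : star a ⬝ᵥ b = -(Complex.I * s) := by
      rw [hb]
      simp [dotProduct_neg, dotProduct_smul, hs, smul_eq_mul]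
    have hR : star b ⬝ᵥ a = Complex.I * s := by
      rw [hb]
      simp [star_smul, neg_dotProduct, smul_dotProduct, hs, smul_eq_mul,
        Complex.star_def, Complex.conj_I]
    have hs0 : s = 0 := by
      have : -(Complex.I * s) = Complex.I * s := by rw [← hL, ← hR, h12]
      have h2s : Complex.I * s = 0 := by
        linear_combination (-1/2 : ℂ) * this
      rcases mul_eq_zero.mp h2s with h | h
      · exact absurd h Complex.I_ne_zero
      · exact h
    have ha0 : a = 0 := by
      rw [hs] at hs0
      exact (dotProduct_star_self_eq_zero).mp hs0
    have hb0 : b = 0 := by rw [hb, ha0]; simp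
    -- now use the second identity
    have hv0 : star v ⬝ᵥ v = 0 := by
      have e1 : star v ⬝ᵥ v = star v ⬝ᵥ ((A' * D'ᵀ - B' * C'ᵀ) *ᵥ v) := by
        rw [hAD', Matrix.one_mulVec]
      have e2 : star v ⬝ᵥ ((A' * D'ᵀ) *ᵥ v) = 0 := by
        rw [← Matrix.mulVec_mulVec, Matrix.dotProduct_mulVec, hA', hstar, ← hA', ← ha, ha0]
        simp
      have e3 : star v ⬝ᵥ ((B' * C'ᵀ) *ᵥ v) = 0 := by
        rw [← Matrix.mulVec_mulVec, Matrix.dotProduct_mulVec, hB', hstar, ← hB', ← hbv, hb0]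
        simp
      rw [e1, Matrix.sub_mulVec, dotProduct_sub, e2, e3, sub_zero]
    exact (dotProduct_star_self_eq_zero).mp hv0
  -- conclude determinant nonzero
  intro hdet
  have hdetT : (Complex.I • A'ᵀ + B'ᵀ).det = 0 := by
    have : (Complex.I • A' + B')ᵀ = Complex.I • A'ᵀ + B'ᵀ := by
      rw [Matrix.transpose_add, Matrix.transpose_smul]
    rw [← this, Matrix.det_transpose]
    exact hdet
  obtain ⟨v, hv0, hv⟩ := (Matrix.exists_mulVec_eq_zero_iff).mpr hdetT
  exact hv0 (hker v hv)

/-- The symplectic shear `[[1, t·1],[0, 1]]`. -/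
noncomputable def shearM (n : ℕ) (t : ℝ) : Matrix (Fin n ⊕ Fin n) (Fin n ⊕ Fin n) ℝ :=
  Matrix.fromBlocks (1 : Matrix (Fin n) (Fin n) ℝ) (t • (1 : Matrix (Fin n) (Fin n) ℝ))
    (0 : Matrix (Fin n) (Fin n) ℝ) (1 : Matrix (Fin n) (Fin n) ℝ)

lemma shear_symp (t : ℝ) : (shearM n t)ᵀ * sympJ n * shearM n t = sympJ n := by
  simp [shearM, sympJ, Matrix.fromBlocks_multiply, Matrix.fromBlocks_transpose,
    Matrix.smul_mul, Matrix.mul_smul]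

lemma shear_eq (t : ℝ) :
    shearM n t =
      1 + t • Matrix.fromBlocks 0 (1 : Matrix (Fin n) (Fin n) ℝ) 0 0 := by
  rw [shearM, ← Matrix.fromBlocks_one]
  ext (i|i) (j|j) <;> simp [Matrix.fromBlocks]

end aux

/-- the free symplectic matrices (symplectic matrices whose upper-right
`n × n` block is invertible) are dense in the symplectic group `Sp(n)`: every symplectic
matrix lies in the closure of the set of free symplectic matrices. -/
theorem freeSymplectic_dense {n : ℕ} (S : Matrix (Fin n ⊕ Fin n) (Fin n ⊕ Fin n) ℝ)
    (hS : Sᵀ * sympJ n * S = sympJ n) :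
    S ∈ closure {T : Matrix (Fin n ⊕ Fin n) (Fin n ⊕ Fin n) ℝ |
      Tᵀ * sympJ n * T = sympJ n ∧ (T.toBlocks₁₂).det ≠ 0} := by
  classical
  set A := S.toBlocks₁₁ with hA
  set B := S.toBlocks₁₂ with hB
  set C := S.toBlocks₂₁ with hC
  set D := S.toBlocks₂₂ with hD
  have hSb : S = Matrix.fromBlocks A B C D := (Matrix.fromBlocks_toBlocks S).symm
  have hJ2 : S * sympJ n * Sᵀ = sympJ n := symp_other hS
  rw [hSb] at hJ2
  simp [sympJ, Matrix.fromBlocks_multiply, Matrix.fromBlocks_transpose] at hJ2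
  obtain ⟨e11, e12, _, _⟩ := hJ2
  have hAB : A * Bᵀ = B * Aᵀ := by linear_combination (norm := module) e11
  have hAD : A * Dᵀ - B * Cᵀ = 1 := by linear_combination (norm := module) e12
  -- the polynomial t ↦ det (t • A + B)
  set Mp : Matrix (Fin n) (Fin n) ℝ[X] :=
    Matrix.of (fun i j => Polynomial.C (A i j) * Polynomial.X + Polynomial.C (B i j)) with hMp
  set P : ℝ[X] := Mp.det with hP
  have heval : ∀ t : ℝ, P.eval t = (t • A + B).det := by
    intro t
    have := RingHom.map_det (Polynomial.evalRingHom t) Mp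
    rw [hP]
    rw [show Polynomial.eval t Mp.det = (Polynomial.evalRingHom t) Mp.det from rfl, this]
    congr 1
    ext i j
    simp only [RingHom.mapMatrix_apply, Matrix.map_apply, hMp, Matrix.of_apply,
      Polynomial.coe_evalRingHom, Polynomial.eval_add, Polynomial.eval_mul,
      Polynomial.eval_C, Polynomial.eval_X, Matrix.add_apply, Matrix.smul_apply,
      smul_eq_mul, mul_comm]
  have hPne : P ≠ 0 := by
    intro h0
    set g : ℝ[X] →+* ℂ := Polynomial.eval₂RingHom Complex.ofRealHom Complex.I with hg
    have hgP : g P = (Complex.I • (A.map Complex.ofRealHom) + B.map Complex.ofRealHom).det := by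
      rw [hP, RingHom.map_det g Mp]
      congr 1
      ext i j
      simp only [RingHom.mapMatrix_apply, Matrix.map_apply, hMp, hg, Matrix.of_apply,
        Polynomial.coe_eval₂RingHom, Polynomial.eval₂_add, Polynomial.eval₂_mul,
        Polynomial.eval₂_C, Polynomial.eval₂_X, Matrix.add_apply, Matrix.smul_apply,
        Matrix.map_apply, smul_eq_mul, Complex.ofRealHom_eq_coe, mul_comm]
    have := key_det A B C D hAB hAD
    rw [← hgP] at this
    rw [h0] at this
    simp at this
  -- choose small parameters avoiding the roots of P
  have hchoice : ∀ k : ℕ, ∃ t : ℝ, |t| < 1 / (k + 1) ∧ P.eval t ≠ 0 := by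
    intro k
    have hlt : (0 : ℝ) < 1 / (k + 1) := by positivity
    have hinf : (Set.Ioo (0:ℝ) (1 / (k + 1))).Infinite := Set.Ioo_infinite hlt
    have hfin : {x : ℝ | P.IsRoot x}.Finite := Polynomial.finite_setOf_isRoot hPne
    obtain ⟨t, ht⟩ := (hinf.diff hfin).nonempty
    obtain ⟨⟨ht0, ht1⟩, htn⟩ := ht
    exact ⟨t, by rwa [abs_of_pos ht0], htn⟩
  choose u hu1 hu2 using hchoice
  have hu0 : Tendsto u atTop (nhds 0) := by
    apply squeeze_zero_norm (fun k => le_of_lt (hu1 k))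
    exact tendsto_one_div_add_atTop_nhds_zero_nat
  set E : Matrix (Fin n ⊕ Fin n) (Fin n ⊕ Fin n) ℝ :=
    Matrix.fromBlocks 0 (1 : Matrix (Fin n) (Fin n) ℝ) 0 0 with hE
  set T : ℕ → Matrix (Fin n ⊕ Fin n) (Fin n ⊕ Fin n) ℝ :=
    fun k => S * shearM n (u k) with hT
  have hTeq : ∀ k, T k = S + u k • (S * E) := by
    intro k
    rw [hT]
    simp only [shear_eq, Matrix.mul_add, Matrix.mul_one, Matrix.mul_smul, hE]
  have htend : Tendsto T atTop (nhds S) := by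
    have h1 : Tendsto (fun k => S + u k • (S * E)) atTop (nhds (S + (0:ℝ) • (S * E))) := by
      exact tendsto_const_nhds.add (hu0.smul_const (S * E))
    simp only [zero_smul, add_zero] at h1
    have : T = fun k => S + u k • (S * E) := funext hTeq
    rw [this]
    exact h1
  apply mem_closure_of_tendsto htend
  apply Filter.Eventually.of_forall
  intro k
  constructor
  · -- symplectic
    rw [hT]
    simp only [Matrix.transpose_mul]
    calc (shearM n (u k))ᵀ * Sᵀ * sympJ n * (S * shearM n (u k))
      = (shearM n (u k))ᵀ * (Sᵀ * sympJ n * S) * shearM n (u k) := by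
          simp only [Matrix.mul_assoc]
    _ = sympJ n := by rw [hS]; exact shear_symp (u k)
  · -- free
    have hblk : (T k).toBlocks₁₂ = u k • A + B := by
      rw [hT]
      conv_lhs => rw [hSb]
      simp [shearM, Matrix.fromBlocks_multiply, Matrix.mul_smul]
    rw [hblk, ← heval]
    exact hu2 k
end

section
/- Let P, Q, L be real n×n matrices with P = Pᵀ, Q = Qᵀ and L invertible, let S_W = [[L⁻¹Q, L⁻¹],[P·L⁻¹·Q − Lᵀ, P·L⁻¹]], and set W_xx = P + Q − L − Lᵀ. Then the kernel of S_W − I and the kernel of W_xx have the same dimension (as real vector spaces). -/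
open Matrix

/-!
The fixed points of `S_W` are exactly the vectors `(x, (L - Q) x)` with `W_xx x = 0`: the first
block row of `(S_W - I) (x, p) = 0` reads `L⁻¹ (p - (L - Q) x) = 0`, and once `p = (L - Q) x` the
second block row collapses to `W_xx x`. Hence `x ↦ (x, (L - Q) x)` maps `ker W_xx` isomorphically
onto `ker (S_W - I)`.
-/

section GraphMulVec

variable {m R : Type*} [Fintype m] [CommRing R]

def graphMulVec (A : Matrix m m R) : (m → R) →ₗ[R] (m ⊕ m → R) where
  toFun x := Sum.elim x (A *ᵥ x)
  map_add' x y := by ext (i | i) <;> simp [mulVec_add]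
  map_smul' c x := by ext (i | i) <;> simp [mulVec_smul]

@[simp]
lemma graphMulVec_apply (A : Matrix m m R) (x : m → R) :
    graphMulVec A x = Sum.elim x (A *ᵥ x) := rfl

lemma graphMulVec_injective (A : Matrix m m R) : Function.Injective (graphMulVec A) :=
  fun x y h => by simpa using congrArg (· ∘ Sum.inl) h

end GraphMulVec

section FreeSymplectic

variable {n : ℕ} {P L Q : Matrix (Fin n) (Fin n) ℝ}

lemma freeSymplectic_sub_one_mulVec_sumElim (hL : IsUnit L.det) (x p : Fin n → ℝ) :
    (freeSymplectic P L Q - 1) *ᵥ Sum.elim x p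
      = Sum.elim (L⁻¹ *ᵥ (p - (L - Q) *ᵥ x)) ((P * L⁻¹ * Q - Lᵀ) *ᵥ x + (P * L⁻¹) *ᵥ p - p) := by
  ext (i | i)
  · simp only [freeSymplectic, sub_mulVec, fromBlocks_mulVec, Sum.elim_comp_inl,
      Sum.elim_comp_inr, one_mulVec, Pi.sub_apply, Sum.elim_inl, Pi.add_apply, mulVec_sub,
      mulVec_mulVec, nonsing_inv_mul L hL]
    ring
  · simp [freeSymplectic, sub_mulVec, fromBlocks_mulVec]

lemma freeSymplectic_sub_one_mulVec_graphMulVec (hL : IsUnit L.det) (x : Fin n → ℝ) :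
    (freeSymplectic P L Q - 1) *ᵥ graphMulVec (L - Q) x
      = Sum.elim (0 : Fin n → ℝ) ((P + Q - L - Lᵀ) *ᵥ x) := by
  have hlower : (P * L⁻¹ * Q - Lᵀ) + P * L⁻¹ * (L - Q) - (L - Q) = P + Q - L - Lᵀ := by
    rw [mul_sub, mul_assoc P L⁻¹ L, nonsing_inv_mul L hL, mul_one]
    abel
  rw [graphMulVec_apply, freeSymplectic_sub_one_mulVec_sumElim hL, sub_self, mulVec_zero,
    mulVec_mulVec, ← add_mulVec, ← sub_mulVec, hlower]

lemma eq_mulVec_of_freeSymplectic_sub_one_mulVec_eq_zero (hL : IsUnit L.det)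
    {x p : Fin n → ℝ} (h : (freeSymplectic P L Q - 1) *ᵥ Sum.elim x p = 0) :
    p = (L - Q) *ᵥ x := by
  have hfirst := congrArg (· ∘ Sum.inl) h
  simp only [freeSymplectic_sub_one_mulVec_sumElim hL, Sum.elim_comp_inl] at hfirst
  rw [← sub_eq_zero]
  calc p - (L - Q) *ᵥ x = L *ᵥ (L⁻¹ *ᵥ (p - (L - Q) *ᵥ x)) := by
        rw [mulVec_mulVec, mul_nonsing_inv L hL, one_mulVec]
    _ = 0 := by rw [hfirst]; exact mulVec_zero L

lemma ker_freeSymplectic_sub_one_eq_map_graphMulVec (hL : IsUnit L.det) :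
    LinearMap.ker (toLin' (freeSymplectic P L Q - 1))
      = (LinearMap.ker (toLin' (P + Q - L - Lᵀ))).map (graphMulVec (L - Q)) := by
  ext v
  simp only [LinearMap.mem_ker, toLin'_apply, Submodule.mem_map]
  constructor
  · intro hv
    rw [← Sum.elim_comp_inl_inr v] at hv ⊢
    have hp := eq_mulVec_of_freeSymplectic_sub_one_mulVec_eq_zero hL hv
    rw [hp, ← graphMulVec_apply, freeSymplectic_sub_one_mulVec_graphMulVec hL] at hv
    exact ⟨v ∘ Sum.inl, by simpa using congrArg (· ∘ Sum.inr) hv, by rw [hp]; rfl⟩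
  · rintro ⟨x, hx, rfl⟩
    rw [freeSymplectic_sub_one_mulVec_graphMulVec hL, hx, Sum.elim_zero_zero]

end FreeSymplectic

theorem ker_SW_sub_one_dim_eq_ker_Wxx_general {n : ℕ} (P L Q : Matrix (Fin n) (Fin n) ℝ)
    (hL : L.det ≠ 0) :
    Module.finrank ℝ (LinearMap.ker (Matrix.toLin' (freeSymplectic P L Q - 1)))
      = Module.finrank ℝ (LinearMap.ker (Matrix.toLin' (P + Q - L - Lᵀ))) := by
  rw [ker_freeSymplectic_sub_one_eq_map_graphMulVec hL.isUnit]
  exact (Submodule.equivMapOfInjective _ (graphMulVec_injective _) _).finrank_eq.symm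

/-- `ker (S_W - I)` and `ker (W_xx)`, with `W_xx = P + Q - L - Lᵀ`, have the
same dimension as real vector spaces. -/
theorem ker_SW_sub_one_dim_eq_ker_Wxx {n : ℕ} (P L Q : Matrix (Fin n) (Fin n) ℝ)
    (hP : Pᵀ = P) (hQ : Qᵀ = Q) (hL : L.det ≠ 0) :
    Module.finrank ℝ (LinearMap.ker (Matrix.toLin' (freeSymplectic P L Q - 1)))
      = Module.finrank ℝ (LinearMap.ker (Matrix.toLin' (P + Q - L - Lᵀ))) :=
  ker_SW_sub_one_dim_eq_ker_Wxx_general P L Q hL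
end

section
/- Let P, Q, L be real n×n matrices with P = Pᵀ, Q = Qᵀ and L invertible, let S = S_W = [[L⁻¹Q, L⁻¹],[P·L⁻¹·Q − Lᵀ, P·L⁻¹]], and assume W_xx = P + Q − L − Lᵀ is invertible (equivalently det(S − I) ≠ 0). Then for every p₀ ∈ ℝⁿ, ⟨M_S (0, p₀), (0, p₀)⟩ = −⟨W_xx⁻¹ p₀, p₀⟩, where (0, p₀) ∈ ℝⁿ × ℝⁿ = ℝ²ⁿ. -/
open Matrix

/-- `M_S = ½ J (S + I) (S - I)⁻¹`. -/
noncomputable def MS {n : ℕ} (S : Matrix (Fin n ⊕ Fin n) (Fin n ⊕ Fin n) ℝ) :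
    Matrix (Fin n ⊕ Fin n) (Fin n ⊕ Fin n) ℝ :=
  (1 / 2 : ℝ) • (sympJ n * (S + 1) * (S - 1)⁻¹)

/-- for `S = S_W` with `W_xx = P + Q - L - Lᵀ` invertible, one has
`⟨M_S (0,p₀), (0,p₀)⟩ = -⟨W_xx⁻¹ p₀, p₀⟩` for every `p₀ ∈ ℝⁿ`. -/
theorem MS_on_vertical_vectors {n : ℕ} (P L Q : Matrix (Fin n) (Fin n) ℝ)
    (hP : Pᵀ = P) (hQ : Qᵀ = Q) (hL : L.det ≠ 0)
    (hW : (P + Q - L - Lᵀ).det ≠ 0) (p₀ : Fin n → ℝ) :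
    (MS (freeSymplectic P L Q)).mulVec (Sum.elim 0 p₀) ⬝ᵥ Sum.elim 0 p₀
      = -((P + Q - L - Lᵀ)⁻¹.mulVec p₀ ⬝ᵥ p₀) := by
  have hLu : IsUnit L.det := isUnit_iff_ne_zero.mpr hL
  set W : Matrix (Fin n) (Fin n) ℝ := P + Q - L - Lᵀ with hWdef
  have hWu : IsUnit W.det := isUnit_iff_ne_zero.mpr hW
  have hLi : L⁻¹ * L = 1 := Matrix.nonsing_inv_mul L hLu
  have hWi : W * W⁻¹ = 1 := Matrix.mul_nonsing_inv W hWu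
  set E₁ : Matrix (Fin n ⊕ Fin n) (Fin n ⊕ Fin n) ℝ := Matrix.fromBlocks 1 0 P 1 with hE₁
  set C₁ : Matrix (Fin n ⊕ Fin n) (Fin n ⊕ Fin n) ℝ :=
    Matrix.fromBlocks (L⁻¹ * Q - 1) L⁻¹ (P - Lᵀ) (-1) with hC₁
  set C₂ : Matrix (Fin n ⊕ Fin n) (Fin n ⊕ Fin n) ℝ :=
    Matrix.fromBlocks 1 0 (L - Q) 1 with hC₂
  set B₂ : Matrix (Fin n ⊕ Fin n) (Fin n ⊕ Fin n) ℝ :=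
    Matrix.fromBlocks (W⁻¹ * (L - P)) W⁻¹ L 0 with hB₂
  set B : Matrix (Fin n ⊕ Fin n) (Fin n ⊕ Fin n) ℝ := C₂ * B₂ with hB
  set S : Matrix (Fin n ⊕ Fin n) (Fin n ⊕ Fin n) ℝ := freeSymplectic P L Q with hS
  have e1 : S - 1 = E₁ * C₁ := by
    rw [hS, hE₁, hC₁, freeSymplectic, Matrix.fromBlocks_multiply,
      ← Matrix.fromBlocks_one (l := Fin n) (m := Fin n) (α := ℝ), sub_eq_add_neg,
      Matrix.fromBlocks_neg, Matrix.fromBlocks_add, Matrix.fromBlocks_inj]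
    refine ⟨by noncomm_ring, by noncomm_ring, by noncomm_ring, by noncomm_ring⟩
  have e2 : C₁ * C₂ = Matrix.fromBlocks 0 L⁻¹ W (-1) := by
    rw [hC₁, hC₂, Matrix.fromBlocks_multiply, Matrix.fromBlocks_inj]
    refine ⟨?_, by noncomm_ring, by rw [hWdef]; noncomm_ring, by noncomm_ring⟩
    rw [Matrix.mul_sub, hLi]; noncomm_ring
  have e3 : Matrix.fromBlocks 0 L⁻¹ W (-1) * B₂ = Matrix.fromBlocks 1 0 (-P) 1 := by
    rw [hB₂, Matrix.fromBlocks_multiply, Matrix.fromBlocks_inj]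
    refine ⟨by rw [hLi]; noncomm_ring, by noncomm_ring, ?_, by rw [hWi]; noncomm_ring⟩
    rw [← Matrix.mul_assoc, hWi]; noncomm_ring
  have e4 : E₁ * Matrix.fromBlocks 1 0 (-P) 1 = 1 := by
    rw [hE₁, Matrix.fromBlocks_multiply,
      ← Matrix.fromBlocks_one (l := Fin n) (m := Fin n) (α := ℝ), Matrix.fromBlocks_inj]
    refine ⟨by noncomm_ring, by noncomm_ring, by noncomm_ring, by noncomm_ring⟩
  have hSB : (S - 1) * B = 1 := by
    rw [e1, hB, Matrix.mul_assoc, ← Matrix.mul_assoc C₁, e2, ← Matrix.mul_assoc,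
      Matrix.mul_assoc E₁, e3, e4]
  have hinv : (S - 1)⁻¹ = B := Matrix.inv_eq_right_inv hSB
  set v : Fin n ⊕ Fin n → ℝ := Sum.elim 0 p₀ with hv
  set x : Fin n → ℝ := W⁻¹.mulVec p₀ with hx
  set u : Fin n ⊕ Fin n → ℝ := Sum.elim x ((L - Q).mulVec x) with hu
  have hB2v : B₂.mulVec v = Sum.elim x 0 := by
    rw [hB₂, hv, Matrix.fromBlocks_mulVec]
    simp [hx]
  have hBv : B.mulVec v = u := by
    rw [hB, ← Matrix.mulVec_mulVec, hB2v, hC₂, Matrix.fromBlocks_mulVec, hu]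
    simp
  have hSu : (S - 1).mulVec u = v := by
    rw [← hBv, Matrix.mulVec_mulVec, hSB, Matrix.one_mulVec]
  have hS1u : (S + 1).mulVec u = v + u + u := by
    have h : S + 1 = (S - 1) + (1 + 1) := by abel
    rw [h, Matrix.add_mulVec, hSu, Matrix.add_mulVec, Matrix.one_mulVec, add_assoc]
  have hMS : (MS S).mulVec v = (1 / 2 : ℝ) • ((sympJ n).mulVec (v + u + u)) := by
    rw [MS, hinv, Matrix.smul_mulVec]
    congr 1
    rw [Matrix.mul_assoc, ← Matrix.mulVec_mulVec, ← Matrix.mulVec_mulVec, hBv, hS1u]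
  have hJ : ∀ a b : Fin n → ℝ, (sympJ n).mulVec (Sum.elim a b) = Sum.elim b (-a) := by
    intro a b
    rw [sympJ, Matrix.fromBlocks_mulVec]
    simp [Matrix.neg_mulVec]
  have hvu : v + u + u = Sum.elim (x + x) (p₀ + (L - Q).mulVec x + (L - Q).mulVec x) := by
    rw [hv, hu]
    ext (i | i) <;> simp
  rw [hMS, hvu, hJ, hv, smul_dotProduct, sumElim_dotProduct_sumElim]
  simp [dotProduct_add, hx]
  ring
end

section
/- Let S and S' be real 2n×2n symplectic matrices with det(S − I) ≠ 0 and det(S' − I) ≠ 0, and set M = M_S, M' = M_{S'}. Then det[(S − I)·(S' − I)·(M + M')] = det(S·S' − I). In particular, if det(S·S' − I) ≠ 0 then M + M' is invertible. -/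
open Matrix

lemma det_sympJ (n : ℕ) : (sympJ n).det = 1 := by
  have h : sympJ n = fromBlocks 1 1 0 1 * fromBlocks 1 0 (-1) 1 * fromBlocks 1 1 0 1 := by
    simp [sympJ, Matrix.fromBlocks_multiply]
  rw [h, det_mul, det_mul, det_fromBlocks_zero₂₁, det_fromBlocks_zero₁₂]
  simp

lemma MS_eq {n : ℕ} (S : Matrix (Fin n ⊕ Fin n) (Fin n ⊕ Fin n) ℝ) (hdet : (S - 1).det ≠ 0) :
    MS S = (1/2 : ℝ) • sympJ n + sympJ n * (S - 1)⁻¹ := by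
  have hu : IsUnit (S - 1).det := hdet.isUnit
  have h2 : S + 1 = (S - 1) + (2:ℝ) • (1 : Matrix (Fin n ⊕ Fin n) (Fin n ⊕ Fin n) ℝ) := by
    rw [two_smul ℝ]; abel
  rw [MS, h2, mul_add, add_mul, mul_smul_comm, smul_mul_assoc,
    Matrix.mul_assoc, Matrix.mul_nonsing_inv _ hu, Matrix.mul_one, smul_add, smul_smul]
  norm_num

/-- for symplectic `S`, `S'` with `det (S - I) ≠ 0`, `det (S' - I) ≠ 0`, putting
`M = M_S` and `M' = M_{S'}` one has `det [(S - I)(S' - I)(M + M')] = det (S S' - I)`; in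
particular if `det (S S' - I) ≠ 0` then `M + M'` is invertible. -/
theorem det_product_MS {n : ℕ} (S S' : Matrix (Fin n ⊕ Fin n) (Fin n ⊕ Fin n) ℝ)
    (hS : Sᵀ * sympJ n * S = sympJ n) (hS' : S'ᵀ * sympJ n * S' = sympJ n)
    (hdet : (S - 1).det ≠ 0) (hdet' : (S' - 1).det ≠ 0) :
    ((S - 1) * (S' - 1) * (MS S + MS S')).det = (S * S' - 1).det
      ∧ ((S * S' - 1).det ≠ 0 → IsUnit (MS S + MS S')) := by
  have huS : IsUnit (S - 1).det := hdet.isUnit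
  have huS' : IsUnit (S' - 1).det := hdet'.isUnit
  set X : Matrix (Fin n ⊕ Fin n) (Fin n ⊕ Fin n) ℝ := 1 + (S - 1)⁻¹ + (S' - 1)⁻¹ with hX
  have hsum : MS S + MS S' = sympJ n * X := by
    rw [MS_eq S hdet, MS_eq S' hdet', hX, mul_add, mul_add, Matrix.mul_one]
    module
  have key : (S - 1) * X * (S' - 1) = S * S' - 1 := by
    rw [hX, mul_add, mul_add, Matrix.mul_one, Matrix.mul_nonsing_inv _ huS, add_mul, add_mul,
      Matrix.one_mul, Matrix.mul_assoc (S - 1), Matrix.nonsing_inv_mul _ huS', Matrix.mul_one]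
    noncomm_ring
  have hdet1 : ((S - 1) * (S' - 1) * (MS S + MS S')).det = (S * S' - 1).det := by
    rw [hsum, det_mul, det_mul, det_mul, det_sympJ, ← key, det_mul, det_mul]
    ring
  refine ⟨hdet1, fun h => ?_⟩
  have hne : (MS S + MS S').det ≠ 0 := by
    intro h0
    rw [← hdet1, det_mul, h0, mul_zero] at h
    exact h rfl
  exact (Matrix.isUnit_iff_isUnit_det _).mpr hne.isUnit
end

section
/- Let P, Q, L be real n×n matrices with P = Pᵀ, Q = Qᵀ and L invertible. Then the free symplectic matrix S_W factors as S_W = [[Iₙ, 0],[P, Iₙ]] · [[L⁻¹, 0],[0, Lᵀ]] · J · [[Iₙ, 0],[Q, Iₙ]], where J = [[0, Iₙ],[−Iₙ, 0]]. -/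
open Matrix

namespace Matrix

variable {k l m n α : Type*} [Fintype m] [Fintype n] [DecidableEq m] [DecidableEq n] [Ring α]

/- The type ascriptions on the products below are needed: without them elaboration picks the
`CStarMatrix` multiplication instance, which `fromBlocks_multiply` does not match. -/

theorem fromBlocks_one_zero_one_mul_fromBlocks_zero_zero (P : Matrix n m α) (A : Matrix m k α)
    (D : Matrix n l α) :
    (fromBlocks 1 0 P 1 : Matrix (m ⊕ n) (m ⊕ n) α) * fromBlocks A 0 0 D =
      fromBlocks A 0 (P * A) D := by
  rw [fromBlocks_multiply]
  simp

theorem fromBlocks_mul_fromBlocks_zero_one_neg_one_zero (A : Matrix k m α) (B : Matrix k n α)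
    (C : Matrix l m α) (D : Matrix l n α) :
    fromBlocks A B C D * (fromBlocks 0 1 (-1) 0 : Matrix (m ⊕ n) (n ⊕ m) α) =
      fromBlocks (-B) A (-D) C := by
  rw [fromBlocks_multiply]
  simp

theorem fromBlocks_mul_fromBlocks_one_zero_one (A : Matrix k m α) (B : Matrix k n α)
    (C : Matrix l m α) (D : Matrix l n α) (Q : Matrix n m α) :
    fromBlocks A B C D * (fromBlocks 1 0 Q 1 : Matrix (m ⊕ n) (m ⊕ n) α) =
      fromBlocks (A + B * Q) B (C + D * Q) D := by
  rw [fromBlocks_multiply]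
  simp

end Matrix

theorem freeSymplectic_factorization_general {n : ℕ} (P L Q : Matrix (Fin n) (Fin n) ℝ) :
    freeSymplectic P L Q
      = Matrix.fromBlocks 1 0 P 1 * Matrix.fromBlocks L⁻¹ 0 0 Lᵀ * sympJ n *
          Matrix.fromBlocks 1 0 Q 1 := by
  rw [sympJ, fromBlocks_one_zero_one_mul_fromBlocks_zero_zero,
    fromBlocks_mul_fromBlocks_zero_one_neg_one_zero, fromBlocks_mul_fromBlocks_one_zero_one,
    freeSymplectic]
  simp only [neg_zero, zero_add, Matrix.mul_assoc, neg_add_eq_sub]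

/-- the factorization
`S_W = [[I,0],[P,I]] · [[L⁻¹,0],[0,Lᵀ]] · J · [[I,0],[Q,I]]`. -/
theorem freeSymplectic_factorization {n : ℕ} (P L Q : Matrix (Fin n) (Fin n) ℝ)
    (hP : Pᵀ = P) (hQ : Qᵀ = Q) (hL : L.det ≠ 0) :
    freeSymplectic P L Q
      = Matrix.fromBlocks 1 0 P 1 * Matrix.fromBlocks L⁻¹ 0 0 Lᵀ * sympJ n *
          Matrix.fromBlocks 1 0 Q 1 :=
  freeSymplectic_factorization_general P L Q
end

section
/- Let M be a real invertible symmetric m×m matrix. Then for every Schwartz function f on ℝᵐ: (2π)^{−m/2} ∫_{ℝᵐ} e^{(i/2)⟨Mu,u⟩} (∫_{ℝᵐ} e^{−i⟨v,u⟩} f(v) dv) du = |det M|^{−1/2} · e^{(iπ/4)·sgn M} · ∫_{ℝᵐ} e^{−(i/2)⟨M⁻¹v,v⟩} f(v) dv, where sgn M is the number of positive eigenvalues of M minus the number of negative eigenvalues of M (counted with multiplicity). (This is the generalized Fresnel formula, interpreted distributionally by pairing against f.) -/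
/-!
Diagonalize `M = Q D Qᵀ` with `Q` orthogonal. The substitutions `u = Q w`, `v = Q x` preserve
Lebesgue measure and turn both sides into the same expressions for `D` and `f ∘ Q`, so it
suffices to treat `M = diagonal d`. There, the `u`-integral is the limit as `ε → 0⁺` of the same
integral damped by `e^{-ε|u|²}` (dominated convergence, `f̂` being integrable). For `ε > 0`
Fubini applies, and the `u`-integral factors into one-dimensional Gaussian Fourier transforms
`∫ e^{-b u² - i x u} du = (π / b)^{1/2} e^{-x² / 4b}` with `b = ε - i dⱼ / 2`. These stay bounded
by `(2π / |dⱼ|)^{1/2}`, so dominated convergence passes to `b = -i dⱼ / 2`, where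
`(π / b)^{1/2} = (2π / |dⱼ|)^{1/2} e^{iπ sgn(dⱼ) / 4}` and `e^{-x² / 4b} = e^{-(i/2) x² / dⱼ}`.
-/

open Matrix MeasureTheory Complex Filter Topology FourierTransform
open scoped Real SchwartzMap

section Fourier

variable {ι : Type*} [Fintype ι]

theorem exists_schwartzMap_eq_integral_cexp_dotProduct_mul (f : 𝓢(ι → ℝ, ℂ)) :
    ∃ h : 𝓢(ι → ℝ, ℂ), ∀ u, ∫ v, cexp (-I * (v ⬝ᵥ u : ℝ)) * f v = h u := by
  let e := EuclideanSpace.equiv ι ℝ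
  -- `𝓕` has kernel `e^{-2πi⟨v, w⟩}`, hence the rescaling by `(2π)⁻¹`.
  let L : (ι → ℝ) ≃L[ℝ] EuclideanSpace ℝ ι := e.symm.trans
    (LinearEquiv.smulOfNeZero ℝ _ (2 * π)⁻¹ (by positivity)).toContinuousLinearEquiv
  refine ⟨SchwartzMap.compCLMOfContinuousLinearEquiv ℂ L
    (𝓕 (SchwartzMap.compCLMOfContinuousLinearEquiv ℂ e f)), fun u => ?_⟩
  change _ = 𝓕 (fun x : EuclideanSpace ℝ ι => f x.ofLp) ((2 * π)⁻¹ • WithLp.toLp 2 u)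
  rw [Real.fourier_eq',
    ← (EuclideanSpace.volume_preserving_symm_measurableEquiv_toLp ι).integral_comp']
  congr 1 with v
  rw [real_inner_smul_right, EuclideanSpace.inner_eq_star_dotProduct, smul_eq_mul]
  congr 2
  rw [MeasurableEquiv.toLp_symm_apply, star_trivial, dotProduct_comm,
    show -2 * π * ((2 * π)⁻¹ * (u ⬝ᵥ v.ofLp)) = -(u ⬝ᵥ v.ofLp) by field_simp]
  push_cast
  ring

end Fourier

section Orthogonal

variable {ι : Type*} [Fintype ι] [DecidableEq ι] {Q : Matrix ι ι ℝ}

theorem transpose_mul_self_of_mem_orthogonalGroup (hQ : Q ∈ orthogonalGroup ι ℝ) :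
    Qᵀ * Q = 1 :=
  mul_eq_one_comm.mp ((mem_orthogonalGroup_iff ι ℝ).mp hQ)

theorem mulVec_dotProduct_mulVec_of_mem_orthogonalGroup (hQ : Q ∈ orthogonalGroup ι ℝ)
    (x y : ι → ℝ) : Q *ᵥ x ⬝ᵥ Q *ᵥ y = x ⬝ᵥ y := by
  rw [dotProduct_mulVec, vecMul_mulVec, transpose_mul_self_of_mem_orthogonalGroup hQ, vecMul_one]

theorem conj_mulVec_dotProduct_of_mem_orthogonalGroup (hQ : Q ∈ orthogonalGroup ι ℝ)
    (A : Matrix ι ι ℝ) (x : ι → ℝ) : (Q * A * Qᵀ) *ᵥ (Q *ᵥ x) ⬝ᵥ Q *ᵥ x = A *ᵥ x ⬝ᵥ x := by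
  rw [mulVec_mulVec, Matrix.mul_assoc, transpose_mul_self_of_mem_orthogonalGroup hQ,
    Matrix.mul_one, ← mulVec_mulVec, mulVec_dotProduct_mulVec_of_mem_orthogonalGroup hQ]

theorem inv_conj_of_mem_orthogonalGroup (hQ : Q ∈ orthogonalGroup ι ℝ) (A : Matrix ι ι ℝ) :
    (Q * A * Qᵀ)⁻¹ = Q * A⁻¹ * Qᵀ := by
  rw [Matrix.mul_inv_rev, Matrix.mul_inv_rev,
    inv_eq_left_inv ((mem_orthogonalGroup_iff ι ℝ).mp hQ),
    inv_eq_left_inv (transpose_mul_self_of_mem_orthogonalGroup hQ), Matrix.mul_assoc]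

theorem abs_det_of_mem_orthogonalGroup (hQ : Q ∈ orthogonalGroup ι ℝ) : |Q.det| = 1 := by
  simpa using CStarRing.norm_of_mem_unitary (det_of_mem_unitary hQ)

theorem measurePreserving_mulVec_of_mem_orthogonalGroup (hQ : Q ∈ orthogonalGroup ι ℝ) :
    MeasurePreserving (Q *ᵥ ·) := by
  have hdet := abs_det_of_mem_orthogonalGroup hQ
  have hmap := Real.map_matrix_volume_pi_eq_smul_volume_pi (M := Q) (by grind)
  have hcoe : ⇑(toLin' Q) = (Q *ᵥ ·) := by funext u; simp
  rw [abs_inv, hdet, inv_one, ENNReal.ofReal_one, one_smul, hcoe] at hmap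
  exact ⟨(mulVecLin Q).continuous_of_finiteDimensional.measurable, hmap⟩

theorem integral_comp_mulVec_of_mem_orthogonalGroup {E : Type*} [NormedAddCommGroup E]
    [NormedSpace ℝ E] (hQ : Q ∈ orthogonalGroup ι ℝ) (φ : (ι → ℝ) → E) :
    ∫ u, φ (Q *ᵥ u) = ∫ u, φ u :=
  (measurePreserving_mulVec_of_mem_orthogonalGroup hQ).integral_comp
    (UnitaryGroup.toLinearEquiv ⟨Q, hQ⟩).toContinuousLinearEquiv.toHomeomorph.measurableEmbedding φ

theorem exists_mem_orthogonalGroup_eq_conj_diagonal_eigenvalues {M : Matrix ι ι ℝ}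
    (hM : M.IsHermitian) : ∃ Q ∈ orthogonalGroup ι ℝ, M = Q * diagonal hM.eigenvalues * Qᵀ :=
  ⟨hM.eigenvectorUnitary, hM.eigenvectorUnitary.2, by
    simpa [star_eq_conjTranspose, conjTranspose_eq_transpose_of_trivial] using hM.spectral_theorem⟩

end Orthogonal

section Pairings

variable {ι : Type*} [Fintype ι]

noncomputable def chirpFourierPairing (A : Matrix ι ι ℝ) (f : (ι → ℝ) → ℂ) : ℂ :=
  ∫ u, cexp ((I / 2) * (A *ᵥ u ⬝ᵥ u : ℝ)) * ∫ v, cexp (-I * (v ⬝ᵥ u : ℝ)) * f v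

noncomputable def chirpPairing (A : Matrix ι ι ℝ) (f : (ι → ℝ) → ℂ) : ℂ :=
  ∫ v, cexp (-(I / 2) * (A *ᵥ v ⬝ᵥ v : ℝ)) * f v

variable [DecidableEq ι] {Q : Matrix ι ι ℝ}

theorem chirpFourierPairing_conj_of_mem_orthogonalGroup (hQ : Q ∈ orthogonalGroup ι ℝ)
    (A : Matrix ι ι ℝ) (f : (ι → ℝ) → ℂ) :
    chirpFourierPairing (Q * A * Qᵀ) f = chirpFourierPairing A (fun x => f (Q *ᵥ x)) := by
  unfold chirpFourierPairing
  rw [← integral_comp_mulVec_of_mem_orthogonalGroup hQ]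
  congr 1 with w
  rw [conj_mulVec_dotProduct_of_mem_orthogonalGroup hQ,
    ← integral_comp_mulVec_of_mem_orthogonalGroup hQ]
  simp_rw [mulVec_dotProduct_mulVec_of_mem_orthogonalGroup hQ]

theorem chirpPairing_conj_of_mem_orthogonalGroup (hQ : Q ∈ orthogonalGroup ι ℝ)
    (A : Matrix ι ι ℝ) (f : (ι → ℝ) → ℂ) :
    chirpPairing (Q * A * Qᵀ) f = chirpPairing A (fun x => f (Q *ᵥ x)) := by
  unfold chirpPairing
  rw [← integral_comp_mulVec_of_mem_orthogonalGroup hQ]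
  simp_rw [conj_mulVec_dotProduct_of_mem_orthogonalGroup hQ]

end Pairings

section GaussianKernel

/-- For `0 < b.re`, the Fourier integral `∫ e^{-b u²} e^{-i x u} du` of a Gaussian. -/
noncomputable def fourierGaussian (b : ℂ) (x : ℝ) : ℂ :=
  (π / b) ^ (1 / 2 : ℂ) * cexp (-x ^ 2 / (4 * b))

theorem continuous_fourierGaussian (b : ℂ) : Continuous (fourierGaussian b) := by
  unfold fourierGaussian
  fun_prop

theorem continuousAt_fourierGaussian {b : ℂ} (hb : b ∈ slitPlane) (x : ℝ) :
    ContinuousAt (fourierGaussian · x) b := by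
  have hb₀ : b ≠ 0 := slitPlane_ne_zero hb
  have hπb : (π / b : ℂ) ∈ slitPlane := by
    have hn : 0 < normSq b := normSq_pos.mpr hb₀
    rw [div_eq_mul_inv, mem_slitPlane_iff, re_ofReal_mul, im_ofReal_mul, inv_re, inv_im]
    rcases mem_slitPlane_iff.mp hb with h | h
    · left; positivity
    · right; simp [h, hn.ne', Real.pi_ne_zero]
  unfold fourierGaussian
  fun_prop (disch := simp [*])

theorem norm_fourierGaussian_le {b : ℂ} (hb : 0 ≤ b.re) (x : ℝ) :
    ‖fourierGaussian b x‖ ≤ (π / ‖b‖) ^ (1 / 2 : ℝ) := by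
  have hexp : (-x ^ 2 / (4 * b) : ℂ).re ≤ 0 := by
    rw [show (-x ^ 2 / (4 * b) : ℂ) = ((-(x ^ 2 / 4) : ℝ) : ℂ) * b⁻¹ by push_cast; ring,
      re_ofReal_mul, inv_re]
    exact mul_nonpos_of_nonpos_of_nonneg (by nlinarith) (div_nonneg hb (normSq_nonneg b))
  rw [fourierGaussian, norm_mul, norm_exp, ← ofReal_one, ← ofReal_ofNat, ← ofReal_div,
    norm_cpow_real, norm_div, norm_real, Real.norm_of_nonneg Real.pi_pos.le]
  exact mul_le_of_le_one_right (by positivity) (Real.exp_le_one_iff.mpr hexp)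

theorem ofReal_mul_cpow_of_pos {r : ℝ} (hr : 0 < r) {z : ℂ} (hz : z ≠ 0) (w : ℂ) :
    ((r : ℂ) * z) ^ w = (r : ℂ) ^ w * z ^ w := by
  have hr' : (r : ℂ) ≠ 0 := ofReal_ne_zero.mpr hr.ne'
  rw [cpow_def_of_ne_zero (mul_ne_zero hr' hz), log_ofReal_mul hr hz, cpow_def_of_ne_zero hr',
    cpow_def_of_ne_zero hz, ofReal_log hr.le, add_mul, exp_add]

theorem sign_mul_I_cpow_half {d : ℝ} (hd : d ≠ 0) :
    ((Real.sign d : ℂ) * I) ^ (1 / 2 : ℂ) = cexp (I * π / 4 * Real.sign d) := by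
  rcases hd.lt_or_gt with h | h
  · rw [Real.sign_of_neg h, ofReal_neg, ofReal_one, neg_one_mul,
      cpow_def_of_ne_zero (neg_ne_zero.mpr I_ne_zero), log_neg_I]
    ring_nf
  · rw [Real.sign_of_pos h, ofReal_one, one_mul, cpow_def_of_ne_zero I_ne_zero, log_I]
    ring_nf

theorem fourierGaussian_neg_I_mul {d : ℝ} (hd : d ≠ 0) (x : ℝ) :
    fourierGaussian (-(I * d / 2)) x =
      ((2 * π / |d|) ^ (1 / 2 : ℝ) : ℝ) * cexp (I * π / 4 * Real.sign d) *
        cexp (-(I / 2) * (x ^ 2 / d)) := by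
  have hd' : (d : ℂ) ≠ 0 := ofReal_ne_zero.mpr hd
  have hbase : (π / (-(I * d / 2)) : ℂ) = ((2 * π / |d| : ℝ) : ℂ) * (Real.sign d * I) := by
    rcases hd.lt_or_gt with h | h
    · rw [Real.sign_of_neg h, abs_of_neg h]
      push_cast; field_simp; ring_nf; simp
    · rw [Real.sign_of_pos h, abs_of_pos h]
      push_cast; field_simp; ring_nf; simp
  have hexp : (-x ^ 2 / (4 * -(I * d / 2)) : ℂ) = -(I / 2) * (x ^ 2 / d) := by
    field_simp
    ring_nf
    simp
  have hsI : (Real.sign d : ℂ) * I ≠ 0 := by simp [Real.sign_eq_zero_iff, hd]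
  rw [fourierGaussian, hbase, ofReal_mul_cpow_of_pos (by positivity) hsI,
    sign_mul_I_cpow_half hd, hexp, ofReal_cpow (by positivity)]
  push_cast
  ring

variable {ι : Type*} [Fintype ι]

theorem inv_diagonal_of_forall_ne_zero {K : Type*} [Field K] [DecidableEq ι] {d : ι → K}
    (hd : ∀ i, d i ≠ 0) : (diagonal d)⁻¹ = diagonal d⁻¹ :=
  inv_eq_left_inv (by rw [diagonal_mul_diagonal, ← diagonal_one]; simp [hd])

theorem prod_fourierGaussian_neg_I_mul [DecidableEq ι] {d : ι → ℝ} (hd : ∀ i, d i ≠ 0)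
    (v : ι → ℝ) :
    ∏ i, fourierGaussian (-(I * d i / 2)) (v i) =
      ((∏ i, (2 * π / |d i|) ^ (1 / 2 : ℝ) : ℝ) : ℂ) * cexp (I * π / 4 * ∑ i, Real.sign (d i)) *
        cexp (-(I / 2) * ((diagonal d)⁻¹ *ᵥ v ⬝ᵥ v : ℝ)) := by
  simp_rw [fourierGaussian_neg_I_mul (hd _), Finset.prod_mul_distrib, ← exp_sum, ofReal_prod,
    ← Finset.mul_sum]
  congr 3
  · push_cast; rfl
  rw [inv_diagonal_of_forall_ne_zero hd]
  simp only [dotProduct, mulVec_diagonal]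
  push_cast
  exact Finset.sum_congr rfl fun i _ => by rw [Pi.inv_apply, ofReal_inv]; ring

end GaussianKernel

section Regularization

variable {ι : Type*} [Fintype ι]

theorem integral_cexp_neg_sum_mul_sq_mul_integral {b : ι → ℂ} (hb : ∀ i, 0 < (b i).re)
    {g : (ι → ℝ) → ℂ} (hg : Integrable g) :
    ∫ u : ι → ℝ, cexp (-∑ i, b i * (u i : ℂ) ^ 2) * ∫ v, cexp (-I * (v ⬝ᵥ u : ℝ)) * g v =
      ∫ v, g v * ∏ i, fourierGaussian (b i) (v i) := by
  set G : (ι → ℝ) → ℂ := fun u => cexp (-∑ i, b i * (u i : ℂ) ^ 2)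
  have hG : Integrable G := by
    simpa using GaussianFourier.integrable_cexp_neg_sum_mul_add hb 0
  have hF : Integrable (Function.uncurry fun u v => G u * (cexp (-I * (v ⬝ᵥ u : ℝ)) * g v))
      (volume.prod volume) := by
    refine (hG.norm.mul_prod hg.norm).mono' ?_ (Eventually.of_forall fun p => ?_)
    · exact (Continuous.aestronglyMeasurable (by fun_prop)).mul
        ((Continuous.aestronglyMeasurable (by fun_prop)).mul hg.1.comp_snd)
    · rw [Function.uncurry_apply_pair, norm_mul, norm_mul,
        show -I * ((p.2 ⬝ᵥ p.1 : ℝ) : ℂ) = ((-(p.2 ⬝ᵥ p.1) : ℝ) : ℂ) * I by push_cast; ring,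
        norm_exp_ofReal_mul_I, one_mul]
  have hinner : ∀ v : ι → ℝ, ∫ u, G u * cexp (-I * (v ⬝ᵥ u : ℝ)) =
      ∏ i, fourierGaussian (b i) (v i) := by
    intro v
    have hexp : ∀ u : ι → ℝ, G u * cexp (-I * (v ⬝ᵥ u : ℝ)) =
        cexp (-∑ i, b i * (u i : ℂ) ^ 2 + ∑ i, -I * v i * u i) := by
      intro u
      rw [← exp_add, dotProduct, ofReal_sum, Finset.mul_sum]
      push_cast
      ring_nf
    simp_rw [hexp, GaussianFourier.integral_cexp_neg_sum_mul_add hb]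
    refine Finset.prod_congr rfl fun i _ => ?_
    rw [fourierGaussian, mul_pow, neg_sq, I_sq]
    ring_nf
  simp_rw [← integral_const_mul]
  rw [integral_integral_swap hF]
  refine integral_congr_ae (Eventually.of_forall fun v => ?_)
  simp_rw [← mul_assoc, integral_mul_const, hinner, mul_comm]

theorem tendsto_integral_cexp_neg_mul_mul {α : Type*} [MeasurableSpace α] {μ : Measure α}
    {q : α → ℝ} (hq : Measurable q) (hq₀ : ∀ x, 0 ≤ q x) {k : α → ℂ} (hk : Integrable k μ) :
    Tendsto (fun ε : ℝ => ∫ x, cexp (-(ε * q x : ℝ)) * k x ∂μ) (𝓝[>] 0) (𝓝 (∫ x, k x ∂μ)) := by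
  refine tendsto_integral_filter_of_dominated_convergence (‖k ·‖)
    (Eventually.of_forall fun ε => ?_) ?_ hk.norm (Eventually.of_forall fun x => ?_)
  · exact (by fun_prop : Measurable fun x => cexp (-(ε * q x : ℝ))).aestronglyMeasurable.mul hk.1
  · filter_upwards [self_mem_nhdsWithin] with ε (hε : 0 < ε)
    refine Eventually.of_forall fun x => ?_
    rw [norm_mul, ← ofReal_neg, norm_exp_ofReal]
    exact mul_le_of_le_one_left (norm_nonneg _)
      (Real.exp_le_one_iff.mpr (neg_nonpos.mpr (mul_nonneg hε.le (hq₀ x))))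
  · refine tendsto_nhdsWithin_of_tendsto_nhds ?_
    simpa using ((by fun_prop : Continuous fun ε : ℝ => cexp (-(ε * q x : ℝ)) * k x).tendsto 0)

theorem tendsto_integral_mul_prod_fourierGaussian {d : ι → ℝ} (hd : ∀ i, d i ≠ 0)
    {g : (ι → ℝ) → ℂ} (hg : Integrable g) :
    Tendsto (fun ε : ℝ => ∫ v, g v * ∏ i, fourierGaussian (ε - I * d i / 2) (v i)) (𝓝[>] 0)
      (𝓝 (∫ v, g v * ∏ i, fourierGaussian (-(I * d i / 2)) (v i))) := by
  have hbound : ∀ ε : ℝ, 0 ≤ ε → ∀ i x,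
      ‖fourierGaussian (ε - I * d i / 2) x‖ ≤ (2 * π / |d i|) ^ (1 / 2 : ℝ) := by
    intro ε hε i x
    have him : |d i| / 2 ≤ ‖(ε : ℂ) - I * d i / 2‖ := by
      simpa [abs_div] using abs_im_le_norm ((ε : ℂ) - I * d i / 2)
    calc ‖fourierGaussian (ε - I * d i / 2) x‖
        ≤ (π / ‖(ε : ℂ) - I * d i / 2‖) ^ (1 / 2 : ℝ) :=
          norm_fourierGaussian_le (by simpa using hε) x
      _ ≤ (π / (|d i| / 2)) ^ (1 / 2 : ℝ) := by
        have := abs_pos.mpr (hd i)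
        gcongr
      _ = (2 * π / |d i|) ^ (1 / 2 : ℝ) := by rw [div_div_eq_mul_div, mul_comm]
  refine tendsto_integral_filter_of_dominated_convergence
    (fun v => ‖g v‖ * ∏ i, (2 * π / |d i|) ^ (1 / 2 : ℝ)) (Eventually.of_forall fun ε => ?_) ?_
    (hg.norm.mul_const _) (Eventually.of_forall fun v => ?_)
  · exact hg.1.mul (Continuous.aestronglyMeasurable (continuous_finsetProd _ fun i _ =>
      (continuous_fourierGaussian _).comp (continuous_apply i)))
  · filter_upwards [self_mem_nhdsWithin] with ε (hε : 0 < ε)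
    refine Eventually.of_forall fun v => ?_
    rw [norm_mul, norm_prod]
    gcongr with i
    exact hbound ε hε.le i (v i)
  · refine tendsto_nhdsWithin_of_tendsto_nhds
      (tendsto_const_nhds.mul (tendsto_finsetProd _ fun i _ => ?_))
    have hpath : Tendsto (fun ε : ℝ => (ε : ℂ) - I * d i / 2) (𝓝 0) (𝓝 (-(I * d i / 2))) := by
      simpa using (by fun_prop : Continuous fun ε : ℝ => (ε : ℂ) - I * d i / 2).tendsto 0
    refine (continuousAt_fourierGaussian ?_ (v i)).tendsto.comp hpath
    simp [mem_slitPlane_iff, hd i]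

end Regularization

section Diagonal

variable {ι : Type*} [Fintype ι]

theorem sum_sign_eq_card_pos_sub_card_neg (d : ι → ℝ) :
    ∑ i, Real.sign (d i) = ((Finset.univ.filter fun i => 0 < d i).card : ℝ) -
      (Finset.univ.filter fun i => d i < 0).card := by
  have hsign : ∀ x : ℝ, Real.sign x = (if 0 < x then 1 else 0) - (if x < 0 then 1 else 0) := by
    intro x
    unfold Real.sign
    split_ifs <;> linarith
  simp only [hsign, Finset.sum_sub_distrib, Finset.sum_boole]

theorem rpow_neg_card_div_two_mul_prod_rpow {c : ℝ} (hc : 0 < c) (d : ι → ℝ) :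
    c ^ (-(Fintype.card ι : ℝ) / 2) * ∏ i, (c / |d i|) ^ (1 / 2 : ℝ) =
      |∏ i, d i| ^ (-(1 : ℝ) / 2) := by
  rw [Real.finsetProd_rpow _ _ (fun i _ => by positivity), Finset.prod_div_distrib,
    Finset.prod_const, Finset.card_univ, ← Finset.abs_prod,
    Real.div_rpow (by positivity) (abs_nonneg _), ← Real.rpow_natCast, ← Real.rpow_mul hc.le,
    mul_div_assoc', ← Real.rpow_add hc, neg_div, neg_div, Real.rpow_neg (abs_nonneg _)]
  rw [show -((Fintype.card ι : ℝ) / 2) + Fintype.card ι * (1 / 2) = 0 by ring, Real.rpow_zero,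
    one_div]

theorem generalized_fresnel_diagonal [DecidableEq ι] {d : ι → ℝ} (hd : ∀ i, d i ≠ 0)
    (g : 𝓢(ι → ℝ, ℂ)) :
    ((2 * π) ^ (-(Fintype.card ι : ℝ) / 2) : ℝ) * chirpFourierPairing (diagonal d) g =
      (|∏ i, d i| ^ (-(1 : ℝ) / 2) : ℝ) *
        cexp ((I * π / 4) * (((Finset.univ.filter fun i => 0 < d i).card : ℤ)
          - ((Finset.univ.filter fun i => d i < 0).card : ℤ) : ℤ)) *
        chirpPairing (diagonal d)⁻¹ g := by
  obtain ⟨h, hh⟩ := exists_schwartzMap_eq_integral_cexp_dotProduct_mul g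
  have hk : Integrable fun u : ι → ℝ => cexp ((I / 2) * (diagonal d *ᵥ u ⬝ᵥ u : ℝ)) *
      ∫ v, cexp (-I * (v ⬝ᵥ u : ℝ)) * g v := by
    simp_rw [hh]
    refine h.integrable.bdd_mul (c := 1) (Continuous.aestronglyMeasurable (by fun_prop))
      (Eventually.of_forall fun u => ?_)
    rw [show (I / 2) * ((diagonal d *ᵥ u ⬝ᵥ u : ℝ) : ℂ) = ((diagonal d *ᵥ u ⬝ᵥ u / 2 : ℝ) : ℂ) * I
      by push_cast; ring, norm_exp_ofReal_mul_I]
  have hreg : ∀ ε : ℝ, 0 < ε → ∫ u : ι → ℝ, cexp (-(ε * (u ⬝ᵥ u) : ℝ)) *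
      (cexp ((I / 2) * (diagonal d *ᵥ u ⬝ᵥ u : ℝ)) * ∫ v, cexp (-I * (v ⬝ᵥ u : ℝ)) * g v) =
      ∫ v, g v * ∏ i, fourierGaussian (ε - I * d i / 2) (v i) := by
    intro ε hε
    rw [← integral_cexp_neg_sum_mul_sq_mul_integral (fun i => by simpa using hε) g.integrable]
    congr 1 with u
    rw [← mul_assoc, ← exp_add]
    congr 2
    simp only [dotProduct, mulVec_diagonal]
    push_cast
    rw [Finset.mul_sum, Finset.mul_sum, ← Finset.sum_neg_distrib, ← Finset.sum_add_distrib,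
      ← Finset.sum_neg_distrib]
    exact Finset.sum_congr rfl fun i _ => by ring
  have hlim := tendsto_integral_cexp_neg_mul_mul (q := fun u : ι → ℝ => u ⬝ᵥ u) (by fun_prop)
    (fun u => Finset.sum_nonneg fun i _ => mul_self_nonneg (u i)) hk
  have hkey : chirpFourierPairing (diagonal d) g =
      ∫ v, g v * ∏ i, fourierGaussian (-(I * d i / 2)) (v i) :=
    tendsto_nhds_unique (l := 𝓝[>] (0 : ℝ)) (hlim.congr' (eventually_nhdsWithin_of_forall hreg))
      (tendsto_integral_mul_prod_fourierGaussian hd g.integrable)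
  simp_rw [hkey, prod_fourierGaussian_neg_I_mul hd, chirpPairing]
  rw [← rpow_neg_card_div_two_mul_prod_rpow Real.two_pi_pos d, sum_sign_eq_card_pos_sub_card_neg,
    ← integral_const_mul, ← integral_const_mul]
  congr 1 with v
  push_cast
  ring

end Diagonal

/-- generalized Fresnel formula: for an invertible real symmetric `m × m`
matrix `M` and every Schwartz function `f` on `ℝᵐ`,
`(2π)^{-m/2} ∫ e^{(i/2)⟨Mu,u⟩} (∫ e^{-i⟨v,u⟩} f(v) dv) du
   = |det M|^{-1/2} e^{(iπ/4) sgn M} ∫ e^{-(i/2)⟨M⁻¹v,v⟩} f(v) dv`,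
where `sgn M` is the number of positive eigenvalues of `M` minus the number of its negative
eigenvalues, counted with multiplicity. -/
theorem generalized_fresnel {m : ℕ} (M : Matrix (Fin m) (Fin m) ℝ)
    (hMsym : M.IsHermitian) (hM : M.det ≠ 0) (f : SchwartzMap (Fin m → ℝ) ℂ) :
    ((2 * Real.pi) ^ (-(m : ℝ) / 2) : ℝ) *
        ∫ u : Fin m → ℝ, Complex.exp ((Complex.I / 2) * (M.mulVec u ⬝ᵥ u : ℝ)) *
          ∫ v : Fin m → ℝ, Complex.exp (-(Complex.I) * (v ⬝ᵥ u : ℝ)) * f v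
      = (|M.det| ^ (-(1 : ℝ) / 2) : ℝ) *
          Complex.exp ((Complex.I * Real.pi / 4) *
            (((Finset.univ.filter fun i => 0 < hMsym.eigenvalues i).card : ℤ)
              - ((Finset.univ.filter fun i => hMsym.eigenvalues i < 0).card : ℤ) : ℤ)) *
          ∫ v : Fin m → ℝ, Complex.exp (-(Complex.I / 2) * (M⁻¹.mulVec v ⬝ᵥ v : ℝ)) * f v := by
  obtain ⟨Q, hQ, hMQ⟩ := exists_mem_orthogonalGroup_eq_conj_diagonal_eigenvalues hMsym
  have hdet : M.det = ∏ i, hMsym.eigenvalues i := by simpa using hMsym.det_eq_prod_eigenvalues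
  have hd : ∀ i, hMsym.eigenvalues i ≠ 0 := fun i h =>
    hM (hdet ▸ Finset.prod_eq_zero (Finset.mem_univ i) h)
  have key := generalized_fresnel_diagonal hd (SchwartzMap.compCLMOfContinuousLinearEquiv ℂ
    (UnitaryGroup.toLinearEquiv ⟨Q, hQ⟩).toContinuousLinearEquiv f)
  have hcomp : ⇑(SchwartzMap.compCLMOfContinuousLinearEquiv ℂ
    (UnitaryGroup.toLinearEquiv ⟨Q, hQ⟩).toContinuousLinearEquiv f) = fun x => f (Q *ᵥ x) := rfl
  rw [hcomp, Fintype.card_fin, ← hdet, ← chirpFourierPairing_conj_of_mem_orthogonalGroup hQ,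
    ← chirpPairing_conj_of_mem_orthogonalGroup hQ, ← inv_conj_of_mem_orthogonalGroup hQ,
    ← hMQ] at key
  exact key
end
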